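/- arXiv:2111.06968 — 2 statements merged into one kernel-verified Lean document; each statement's English description precedes it below -/
import Mathlib

section
/- In a finite metric space with distinct pairwise distances, the functional graph of the nearest-neighbor map has the property that every cycle has length exactly 2; equivalently, if δ^k(x) = x for some k ≥ 1, then k is even and δ(δ(x)) = x. -/
/-- Every cycle of the nearest-neighbor map has length exactly 2: if
δ^[k] x = x for some k ≥ 1, then k is even and δ (δ x) = x. -/
theorem nn_map_cycles_have_length_two
    {X : Type*} [MetricSpace X] [Fintype X] (hcard : 2 ≤ Fintype.card X)
    (hdist : ∀ a b c d : X, a ≠ b → c ≠ d → ({a, b} : Set X) ≠ {c, d} →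
      dist a b ≠ dist c d)
    (δ : X → X)
    (hδ : ∀ x : X, δ x ≠ x ∧ ∀ z : X, z ≠ x → z ≠ δ x → dist x (δ x) < dist x z)
    (x : X) (k : ℕ) (hk : 1 ≤ k) (hcycle : δ^[k] x = x) :
    Even k ∧ δ (δ x) = x := by
  have step : ∀ y : X, dist (δ y) (δ (δ y)) ≤ dist y (δ y) := by
    intro y
    by_cases h : δ (δ y) = y
    · rw [h, dist_comm]
    · have h' := (hδ (δ y)).2 y (Ne.symm (hδ y).1) (fun hy => h hy.symm)
      exact le_of_lt (by calc dist (δ y) (δ (δ y)) < dist (δ y) y := h'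
        _ = dist y (δ y) := dist_comm _ _)
  have h2 : δ (δ x) = x := by
    by_contra h2
    set d : ℕ → ℝ := fun i => dist (δ^[i] x) (δ^[i+1] x) with hd
    have anti : Antitone d := by
      apply antitone_nat_of_succ_le
      intro n
      show dist (δ^[n+1] x) (δ^[n+1+1] x) ≤ dist (δ^[n] x) (δ^[n+1] x)
      rw [Function.iterate_succ_apply' δ (n+1) x, Function.iterate_succ_apply' δ n x]
      exact step (δ^[n] x)
    have h1 : d 1 < d 0 := by
      show dist (δ^[1] x) (δ^[1+1] x) < dist (δ^[0] x) (δ^[0+1] x)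
      simp only [Function.iterate_succ_apply', Function.iterate_zero_apply]
      have h' := (hδ (δ x)).2 x (Ne.symm (hδ x).1) (fun hy => h2 hy.symm)
      calc dist (δ x) (δ (δ x)) < dist (δ x) x := h'
        _ = dist x (δ x) := dist_comm _ _
    have hk0 : d k = d 0 := by
      show dist (δ^[k] x) (δ^[k+1] x) = dist (δ^[0] x) (δ^[0+1] x)
      rw [Function.iterate_succ_apply' δ k x, hcycle]
      simp
    have hle : d k ≤ d 1 := anti hk
    linarith
  refine ⟨?_, h2⟩
  have h2m : ∀ m, δ^[2*m] x = x := by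
    intro m
    induction m with
    | zero => simp
    | succ n ih =>
      have h2x : δ^[2] x = x := by simpa [Function.iterate_succ_apply'] using h2
      rw [Nat.mul_succ, Function.iterate_add_apply, h2x, ih]
  rcases Nat.even_or_odd k with he | ho
  · exact he
  · exfalso
    obtain ⟨m, hm⟩ := ho
    rw [hm, add_comm, Function.iterate_add_apply, h2m] at hcycle
    exact (hδ x).1 (by simpa using hcycle)
end

section
/- In a finite metric space with distinct pairwise distances, consider the undirected nearest-neighbor graph whose edges join each point to its nearest neighbor. Then every connected component of this graph contains exactly one pair of reciprocal nearest neighbors. -/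
/-- The undirected nearest-neighbor graph: each point is joined to its nearest
neighbor (under the map δ). -/
def nnGraph {X : Type*} (δ : X → X) : SimpleGraph X where
  Adj a b := a ≠ b ∧ (δ a = b ∨ δ b = a)
  symm := by
    refine ⟨?_⟩
    intro a b h
    exact ⟨h.1.symm, h.2.symm⟩
  loopless := by
    refine ⟨?_⟩
    intro a h
    exact h.1 rfl

section Aux

variable {X : Type*} [MetricSpace X] [Fintype X] {δ : X → X}

def HNN (δ : X → X) : Prop :=
  ∀ x : X, δ x ≠ x ∧ ∀ z : X, z ≠ x → z ≠ δ x → dist x (δ x) < dist x z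

lemma rnn_key (hδ : HNN δ) (x : X) (h : δ (δ x) ≠ x) :
    dist (δ x) (δ (δ x)) < dist x (δ x) := by
  have h1 : (x : X) ≠ δ x := Ne.symm (hδ x).1
  have h2 : (x : X) ≠ δ (δ x) := Ne.symm h
  have := (hδ (δ x)).2 x h1 h2
  rwa [dist_comm (δ x) x] at this

open Classical in
lemma rnn_card (hδ : HNN δ) (x : X) (h : δ (δ x) ≠ x) :
    (Finset.univ.filter (fun z => dist z (δ z) < dist (δ x) (δ (δ x)))).card <
      (Finset.univ.filter (fun z => dist z (δ z) < dist x (δ x))).card := by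
  have hk := rnn_key hδ x h
  apply Finset.card_lt_card
  constructor
  · intro z hz
    simp only [Finset.mem_filter, Finset.mem_univ, true_and] at hz ⊢
    exact hz.trans hk
  · intro hsub
    have : δ x ∈ Finset.univ.filter (fun z => dist z (δ z) < dist x (δ x)) := by
      simp only [Finset.mem_filter, Finset.mem_univ, true_and]
      exact hk
    have := hsub this
    simp only [Finset.mem_filter, Finset.mem_univ, true_and] at this
    exact lt_irrefl _ this

open Classical in
noncomputable def rnnPair [Fintype X] (hδ : HNN δ) (x : X) : Sym2 X :=
  if h : δ (δ x) = x then s(x, δ x) else rnnPair hδ (δ x)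
termination_by (Finset.univ.filter (fun z => dist z (δ z) < dist x (δ x))).card
decreasing_by exact rnn_card hδ x h

lemma rnnPair_delta (hδ : HNN δ) (x : X) : rnnPair hδ x = rnnPair hδ (δ x) := by
  by_cases h : δ (δ x) = x
  · have h2 : δ (δ (δ x)) = δ x := by rw [h]
    rw [rnnPair.eq_def, rnnPair.eq_def, dif_pos h, dif_pos h2, h]
    exact Sym2.eq_swap
  · rw [rnnPair.eq_def, dif_neg h]

lemma rnnPair_rnn (hδ : HNN δ) (x y : X) (hxy : δ x = y) (hyx : δ y = x) :
    rnnPair hδ x = s(x, y) := by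
  have h : δ (δ x) = x := by rw [hxy, hyx]
  rw [rnnPair.eq_def, dif_pos h, hxy]

lemma rnnPair_spec (hδ : HNN δ) (x : X) : ∃ u v : X, rnnPair hδ x = s(u, v) ∧
    δ u = v ∧ δ v = u ∧ (nnGraph δ).Reachable x u := by
  by_cases h : δ (δ x) = x
  · exact ⟨x, δ x, by rw [rnnPair.eq_def, dif_pos h], rfl, h, SimpleGraph.Reachable.refl x⟩
  · obtain ⟨u, v, h1, h2, h3, h4⟩ := rnnPair_spec hδ (δ x)
    refine ⟨u, v, ?_, h2, h3, ?_⟩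
    · rw [rnnPair.eq_def, dif_neg h]; exact h1
    · have hadj : (nnGraph δ).Adj x (δ x) := ⟨Ne.symm (hδ x).1, Or.inl rfl⟩
      exact hadj.reachable.trans h4
termination_by (Finset.univ.filter (fun z => dist z (δ z) < dist x (δ x))).card
decreasing_by exact rnn_card hδ x h

lemma rnnPair_adj (hδ : HNN δ) {a b : X} (h : (nnGraph δ).Adj a b) :
    rnnPair hδ a = rnnPair hδ b := by
  rcases h.2 with h' | h'
  · rw [rnnPair_delta hδ a, h']
  · rw [rnnPair_delta hδ b, h']

lemma rnnPair_reachable (hδ : HNN δ) {a b : X} (h : (nnGraph δ).Reachable a b) :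
    rnnPair hδ a = rnnPair hδ b := by
  obtain ⟨w⟩ := h
  induction w with
  | nil => rfl
  | cons hadj _ ih => exact (rnnPair_adj hδ hadj).trans ih

end Aux

/-- Every connected component of the nearest-neighbor graph contains exactly
one pair of reciprocal nearest neighbors. -/
theorem nnGraph_component_unique_RNN
    {X : Type*} [MetricSpace X] [Fintype X] (hcard : 2 ≤ Fintype.card X)
    (hdist : ∀ a b c d : X, a ≠ b → c ≠ d → ({a, b} : Set X) ≠ {c, d} →
      dist a b ≠ dist c d)
    (δ : X → X)
    (hδ : ∀ x : X, δ x ≠ x ∧ ∀ z : X, z ≠ x → z ≠ δ x → dist x (δ x) < dist x z)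
    (c : (nnGraph δ).ConnectedComponent) :
    ∃! s : Sym2 X, ∃ x y : X, s = s(x, y) ∧ δ x = y ∧ δ y = x ∧
      (nnGraph δ).connectedComponentMk x = c := by
  obtain ⟨x₀, hx₀⟩ := c.exists_rep
  refine ⟨rnnPair hδ x₀, ?_, ?_⟩
  · obtain ⟨u, v, h1, h2, h3, h4⟩ := rnnPair_spec hδ x₀
    refine ⟨u, v, h1, h2, h3, ?_⟩
    exact (SimpleGraph.ConnectedComponent.sound h4.symm).trans hx₀
  · rintro s ⟨x, y, hs, hxy, hyx, hcomp⟩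
    have hreach : (nnGraph δ).Reachable x x₀ :=
      SimpleGraph.ConnectedComponent.exact (hcomp.trans hx₀.symm)
    rw [hs, ← rnnPair_rnn hδ x y hxy hyx]
    exact rnnPair_reachable hδ hreach
end
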